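/- arXiv:2401.00301 — 2 statements merged into one kernel-verified Lean document; each statement's English description precedes it below -/
import Mathlib

section
/- Let N, κ be positive integers, Δ > 0, U_f an N×N unitary matrix, and for each k = 0, …, κ−1 let H⁽ᵏ⁾ and V⁽ᵏ⁾ be N×N Hermitian matrices. Define the perturbed step propagators Ã_k(δ) = exp(−i(H⁽ᵏ⁾ + δV⁽ᵏ⁾)Δ), the perturbed total propagator Φ̃(δ) = Ã_{κ−1}(δ)⋯Ã_0(δ), the nominal step propagators A_k = Ã_k(0), the partial products P_k = A_{k−1}⋯A_0 and Q_k = A_{κ−1}⋯A_{k+1} (with empty products equal to the identity), and the perturbed fidelity error ε̃(δ) = 1 − |Tr[U_f† Φ̃(δ)]|/N. Assume Tr[U_f† Φ̃(0)] ≠ 0 and let φ = arg Tr[U_f† Φ̃(0)]. Then ε̃ is differentiable at δ = 0 and its derivative there equals ∑_{k=0}^{κ−1} Re{ −(e^{−iφ}/N) · Tr[ P_k · U_f† · Q_k · X_k ] }, where X_k = −i ∫₀^Δ exp(−iH⁽ᵏ⁾(Δ−τ)) · V⁽ᵏ⁾ · exp(−iH⁽ᵏ⁾τ) dτ. (The differential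 sensitivity ζ of the gate fidelity error to a piecewise-constant structured Hamiltonian uncertainty, Eqs. (12)–(14).) -/
open scoped Matrix Matrix.Norms.L2Operator
open NormedSpace

section Aux

variable {n : ℕ}

local notation "M" => Matrix (Fin n) (Fin n) ℂ

lemma exp_deriv_real (B : M) (c : ℝ) :
    HasDerivAt (fun s : ℝ => exp ((s : ℂ) • B)) (exp ((c : ℂ) • B) * B) c := by
  have h := (hasDerivAt_exp_smul_const (𝕂 := ℂ) B (c : ℂ))
  have := h.scomp c Complex.ofRealCLM.hasDerivAt
  rw [Complex.ofRealCLM_apply, Complex.ofReal_one, one_smul] at this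
  exact this

lemma duhamel (B C : M) :
    exp (B + C) = exp B +
      ∫ s in (0:ℝ)..1,
        exp (((1 - s : ℝ) : ℂ) • B) * C * exp ((s : ℂ) • (B + C)) := by
  have hderiv : ∀ s : ℝ,
      HasDerivAt (fun u : ℝ => exp (((1 - u : ℝ) : ℂ) • B) * exp ((u : ℂ) • (B + C)))
        (exp (((1 - s : ℝ) : ℂ) • B) * C * exp ((s : ℂ) • (B + C))) s := by
    intro s
    have hinner : HasDerivAt (fun u : ℝ => 1 - u) (-1 : ℝ) s := by
      simpa using (hasDerivAt_id s).const_sub 1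
    have h1 : HasDerivAt (fun u : ℝ => exp (((1 - u : ℝ) : ℂ) • B))
        ((-1 : ℝ) • (exp (((1 - s : ℝ) : ℂ) • B) * B)) s :=
      (exp_deriv_real B (1 - s)).scomp s hinner
    have h2 : HasDerivAt (fun u : ℝ => exp ((u : ℂ) • (B + C)))
        (exp ((s : ℂ) • (B + C)) * (B + C)) s := exp_deriv_real (B + C) s
    have hprod := h1.mul h2
    have hcomm : exp ((s : ℂ) • (B + C)) * (B + C)
        = (B + C) * exp ((s : ℂ) • (B + C)) :=
      (((Commute.refl (B + C)).smul_left ((s : ℂ))).exp_left).eq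
    have heq : (-1 : ℝ) • (exp (((1 - s : ℝ) : ℂ) • B) * B) * exp ((s : ℂ) • (B + C))
          + exp (((1 - s : ℝ) : ℂ) • B) * (exp ((s : ℂ) • (B + C)) * (B + C))
        = exp (((1 - s : ℝ) : ℂ) • B) * C * exp ((s : ℂ) • (B + C)) := by
      rw [hcomm, neg_one_smul]
      noncomm_ring
    rw [heq] at hprod
    exact hprod
  have hcont : Continuous (fun s : ℝ =>
      exp (((1 - s : ℝ) : ℂ) • B) * C * exp ((s : ℂ) • (B + C))) := by
    apply Continuous.mul
    · apply Continuous.mul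
      · exact (continuous_iff_continuousAt.2 fun x => (exp_analytic (𝕂 := ℂ) x).continuousAt).comp (by fun_prop)
      · exact continuous_const
    · exact (continuous_iff_continuousAt.2 fun x => (exp_analytic (𝕂 := ℂ) x).continuousAt).comp (by fun_prop)
  have hFTC := intervalIntegral.integral_eq_sub_of_hasDerivAt
    (fun s _ => hderiv s) (hcont.intervalIntegrable 0 1)
  have e1 : exp (((1 - (1:ℝ) : ℝ) : ℂ) • B) * exp (((1:ℝ) : ℂ) • (B + C))
      = exp (B + C) := by norm_num
  have e0 : exp (((1 - (0:ℝ) : ℝ) : ℂ) • B) * exp (((0:ℝ) : ℂ) • (B + C))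
      = exp B := by norm_num [exp_zero]
  rw [e1, e0] at hFTC
  rw [hFTC]
  abel

lemma exp_perturb_hasDerivAt (B W : M) :
    HasDerivAt (fun δ : ℝ => exp (B + (δ : ℂ) • W))
      (∫ s in (0:ℝ)..1, exp (((1 - s : ℝ) : ℂ) • B) * W * exp ((s : ℂ) • B)) 0 := by
  set g : ℝ → M := fun δ => ∫ s in (0:ℝ)..1,
    exp (((1 - s : ℝ) : ℂ) • B) * W * exp ((s : ℂ) • (B + (δ : ℂ) • W)) with hg
  have hid : ∀ δ : ℝ, exp (B + (δ : ℂ) • W) = exp B + δ • g δ := by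
    intro δ
    rw [duhamel B ((δ : ℂ) • W), hg]
    congr 1
    rw [← intervalIntegral.integral_smul]
    congr 1
    funext s
    have : exp (((1 - s : ℝ) : ℂ) • B) * ((δ : ℂ) • W) * exp ((s : ℂ) • (B + (δ : ℂ) • W))
        = (δ : ℂ) • (exp (((1 - s : ℝ) : ℂ) • B) * W * exp ((s : ℂ) • (B + (δ : ℂ) • W))) := by
      simp [mul_smul_comm, smul_mul_assoc]
    rw [this, Complex.coe_smul]
  have hgcont : Continuous g := by
    apply intervalIntegral.continuous_parametric_intervalIntegral_of_continuous'
    have : Continuous (fun p : ℝ × ℝ =>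
        exp (((1 - p.2 : ℝ) : ℂ) • B) * W * exp ((p.2 : ℂ) • (B + (p.1 : ℂ) • W))) := by
      apply Continuous.mul
      · apply Continuous.mul
        · exact (continuous_iff_continuousAt.2 fun x => (exp_analytic (𝕂 := ℂ) x).continuousAt).comp (by fun_prop)
        · exact continuous_const
      · exact (continuous_iff_continuousAt.2 fun x => (exp_analytic (𝕂 := ℂ) x).continuousAt).comp (by fun_prop)
    exact this
  have hg0 : g 0 = ∫ s in (0:ℝ)..1,
      exp (((1 - s : ℝ) : ℂ) • B) * W * exp ((s : ℂ) • B) := by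
    rw [hg]; norm_num
  rw [hasDerivAt_iff_tendsto_slope]
  have hslope : ∀ δ : ℝ, δ ≠ 0 →
      slope (fun δ : ℝ => exp (B + (δ : ℂ) • W)) 0 δ = g δ := by
    intro δ hδ
    rw [slope_def_module]
    rw [hid δ, hid 0]
    simp [hδ, smul_smul, inv_mul_cancel₀]
  rw [← hg0]
  have : Filter.Tendsto g (nhdsWithin 0 {(0:ℝ)}ᶜ) (nhds (g 0)) :=
    (hgcont.continuousAt.tendsto).mono_left nhdsWithin_le_nhds
  apply this.congr'
  filter_upwards [self_mem_nhdsWithin] with δ hδ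
  exact (hslope δ hδ).symm

lemma A_hasDerivAt (Δ : ℝ) (Hk Vk : M) :
    HasDerivAt (fun δ : ℝ => exp ((-(Complex.I) * (Δ : ℂ)) • (Hk + (δ : ℂ) • Vk)))
      ((-Complex.I) • ∫ τ in (0:ℝ)..Δ,
        exp ((-(Complex.I) * ((Δ - τ : ℝ) : ℂ)) • Hk) * Vk *
          exp ((-(Complex.I) * (τ : ℂ)) • Hk)) 0 := by
  set B : M := (-(Complex.I) * (Δ : ℂ)) • Hk with hB
  set W : M := (-(Complex.I) * (Δ : ℂ)) • Vk with hW
  have hfun : (fun δ : ℝ => exp ((-(Complex.I) * (Δ : ℂ)) • (Hk + (δ : ℂ) • Vk)))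
      = fun δ : ℝ => exp (B + (δ : ℂ) • W) := by
    funext δ
    rw [hB, hW]
    congr 1
    rw [smul_add, smul_comm]
  have hd := exp_perturb_hasDerivAt B W
  rw [← hfun] at hd
  convert hd using 1
  -- show X = integral
  have hint : ∀ s : ℝ,
      exp (((1 - s : ℝ) : ℂ) • B) * W * exp ((s : ℂ) • B)
      = (-(Complex.I) * (Δ : ℂ)) •
        (exp ((-(Complex.I) * ((Δ - Δ * s : ℝ) : ℂ)) • Hk) * Vk *
          exp ((-(Complex.I) * ((Δ * s : ℝ) : ℂ)) • Hk)) := by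
    intro s
    rw [hB, hW]
    have e1 : ((1 - s : ℝ) : ℂ) • ((-(Complex.I) * (Δ : ℂ)) • Hk)
        = (-(Complex.I) * ((Δ - Δ * s : ℝ) : ℂ)) • Hk := by
      rw [smul_smul]; congr 1; push_cast; ring
    have e2 : ((s : ℝ) : ℂ) • ((-(Complex.I) * (Δ : ℂ)) • Hk)
        = (-(Complex.I) * ((Δ * s : ℝ) : ℂ)) • Hk := by
      rw [smul_smul]; congr 1; push_cast; ring
    rw [e1, e2, mul_smul_comm, smul_mul_assoc]
  have hrhs : (∫ s in (0:ℝ)..1, exp (((1 - s : ℝ) : ℂ) • B) * W * exp ((s : ℂ) • B))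
      = (-(Complex.I) * (Δ : ℂ)) • ∫ s in (0:ℝ)..1,
        exp ((-(Complex.I) * ((Δ - Δ * s : ℝ) : ℂ)) • Hk) * Vk *
          exp ((-(Complex.I) * ((Δ * s : ℝ) : ℂ)) • Hk) := by
    rw [← intervalIntegral.integral_smul]
    congr 1; funext s; exact hint s
  rw [hrhs]
  -- change of variables τ = Δ * s
  set F : ℝ → M := fun τ =>
    exp ((-(Complex.I) * ((Δ - τ : ℝ) : ℂ)) • Hk) * Vk *
      exp ((-(Complex.I) * (τ : ℂ)) • Hk) with hF
  have hcv : Δ • (∫ s in (0:ℝ)..1, F (Δ * s)) = ∫ τ in (Δ * 0)..(Δ * 1), F τ :=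
    intervalIntegral.smul_integral_comp_mul_left F Δ
  have : (∫ s in (0:ℝ)..1,
        exp ((-(Complex.I) * ((Δ - Δ * s : ℝ) : ℂ)) • Hk) * Vk *
          exp ((-(Complex.I) * ((Δ * s : ℝ) : ℂ)) • Hk))
      = ∫ s in (0:ℝ)..1, F (Δ * s) := by
    congr 1
  rw [this, mul_smul]
  congr 1
  rw [Complex.coe_smul, hcv]
  norm_num

end Aux

/-- The differential sensitivity of the gate fidelity error to a piecewise-constant
structured Hamiltonian uncertainty (Eqs. (12)–(14)): with perturbed step propagators
`Ã_k(δ) = exp(−i(H⁽ᵏ⁾ + δV⁽ᵏ⁾)Δ)`, perturbed total propagator `Φ̃(δ) = Ã_{κ−1}(δ)⋯Ã_0(δ)`,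
nominal partial products `P_k = A_{k−1}⋯A_0`, `Q_k = A_{κ−1}⋯A_{k+1}`, and perturbed
fidelity error `ε̃(δ) = 1 − |Tr[U_f† Φ̃(δ)]|/N`, if the nominal overlap is nonzero with
argument `φ`, then `ε̃` is differentiable at `δ = 0` with derivative
`∑ₖ Re{−(e^{−iφ}/N) Tr[P_k U_f† Q_k X_k]}` where
`X_k = −i ∫₀^Δ exp(−iH⁽ᵏ⁾(Δ−τ)) V⁽ᵏ⁾ exp(−iH⁽ᵏ⁾τ) dτ`. -/
theorem differential_sensitivity_of_fidelity_error (N κ : ℕ) (hN : 0 < N) (hκ : 0 < κ)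
    (Δ : ℝ) (hΔ : 0 < Δ)
    (Uf : Matrix (Fin N) (Fin N) ℂ) (hUf : Uf ∈ Matrix.unitaryGroup (Fin N) ℂ)
    (H V : ℕ → Matrix (Fin N) (Fin N) ℂ)
    (hH : ∀ k < κ, (H k).IsHermitian) (hV : ∀ k < κ, (V k).IsHermitian)
    (A : ℕ → ℝ → Matrix (Fin N) (Fin N) ℂ)
    (hA : ∀ k δ, A k δ = exp ((-(Complex.I) * (Δ : ℂ)) • (H k + (δ : ℂ) • V k)))
    (Φ : ℝ → Matrix (Fin N) (Fin N) ℂ)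
    (hΦ : ∀ δ, Φ δ = (((List.range κ).reverse).map (fun k => A k δ)).prod)
    (P Q : ℕ → Matrix (Fin N) (Fin N) ℂ)
    (hP : ∀ k, P k = (((List.range k).reverse).map (fun j => A j 0)).prod)
    (hQ : ∀ k, Q k =
      ((((List.range κ).reverse).filter (fun j => decide (k < j))).map (fun j => A j 0)).prod)
    (εt : ℝ → ℝ)
    (hεt : ∀ δ, εt δ = 1 - ‖(Ufᴴ * Φ δ).trace‖ / N)
    (h0 : (Ufᴴ * Φ 0).trace ≠ 0)
    (φ : ℝ) (hφ : φ = Complex.arg ((Ufᴴ * Φ 0).trace))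
    (X : ℕ → Matrix (Fin N) (Fin N) ℂ)
    (hX : ∀ k, X k = (-Complex.I) • ∫ τ in (0:ℝ)..Δ,
        exp ((-(Complex.I) * ((Δ - τ : ℝ) : ℂ)) • H k) * V k *
          exp ((-(Complex.I) * (τ : ℂ)) • H k)) :
    HasDerivAt εt
      (∑ k ∈ Finset.range κ,
        (-(Complex.exp (-(φ : ℂ) * Complex.I) / (N : ℂ)) *
          (P k * Ufᴴ * Q k * X k).trace).re) 0 := by
  -- derivative of each step propagator
  have hAd : ∀ k, HasDerivAt (fun δ : ℝ => A k δ) (X k) 0 := by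
    intro k
    have h := A_hasDerivAt Δ (H k) (V k)
    rw [← hX k] at h
    have hfeq : (fun δ : ℝ => A k δ)
        = fun δ : ℝ => exp ((-(Complex.I) * (Δ : ℂ)) • (H k + (δ : ℂ) • V k)) :=
      funext fun δ => hA k δ
    rw [hfeq]
    exact h
  -- derivative of partial products
  have key : ∀ n : ℕ,
      HasDerivAt (fun δ : ℝ => (((List.range n).reverse).map (fun k => A k δ)).prod)
        (∑ k ∈ Finset.range n,
          ((((List.range n).reverse).filter (fun j => decide (k < j))).map
            (fun j => A j 0)).prod * X k * P k) 0 := by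
    intro n
    induction n with
    | zero => simpa using hasDerivAt_const (0:ℝ) (1 : Matrix (Fin N) (Fin N) ℂ)
    | succ n ih =>
      have hsplit : (fun δ : ℝ => (((List.range (n+1)).reverse).map (fun k => A k δ)).prod)
          = fun δ : ℝ => A n δ * (((List.range n).reverse).map (fun k => A k δ)).prod := by
        funext δ
        rw [List.range_succ, List.reverse_append]
        simp
      have hd := (hAd n).mul ih
      rw [hsplit]
      refine hd.congr_deriv (Eq.symm ?_)
      have hP0 : (((List.range n).reverse).map (fun k => A k 0)).prod = P n := (hP n).symm
      have hQn : ((((List.range (n+1)).reverse).filter (fun j => decide (n < j))).map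
          (fun j => A j 0)).prod = 1 := by
        have hnil : (((List.range (n+1)).reverse).filter (fun j => decide (n < j))) = [] := by
          apply List.filter_eq_nil_iff.mpr
          intro j hj
          simp only [List.mem_reverse, List.mem_range] at hj
          simp only [decide_eq_true_eq]
          omega
        rw [hnil]
        simp
      have hQsucc : ∀ k, k < n →
          ((((List.range (n+1)).reverse).filter (fun j => decide (k < j))).map
            (fun j => A j 0)).prod
          = A n 0 * ((((List.range n).reverse).filter (fun j => decide (k < j))).map
            (fun j => A j 0)).prod := by
        intro k hk
        rw [List.range_succ, List.reverse_append]
        simp [List.filter_cons, hk]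
      rw [Finset.sum_range_succ, hQn, one_mul, hP0, Finset.mul_sum, add_comm]
      congr 1
      apply Finset.sum_congr rfl
      intro k hk
      rw [hQsucc k (Finset.mem_range.mp hk)]
      noncomm_ring
  -- derivative of total propagator
  have hΦd : HasDerivAt Φ (∑ k ∈ Finset.range κ, Q k * X k * P k) 0 := by
    have h := key κ
    have hfeq : (fun δ : ℝ => (((List.range κ).reverse).map (fun k => A k δ)).prod) = Φ :=
      funext fun δ => (hΦ δ).symm
    rw [hfeq] at h
    convert h using 1
    apply Finset.sum_congr rfl
    intro k _
    rw [hQ k]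
  -- derivative of the overlap trace
  set D : Matrix (Fin N) (Fin N) ℂ := ∑ k ∈ Finset.range κ, Q k * X k * P k with hD
  set L : Matrix (Fin N) (Fin N) ℂ →ₗ[ℂ] ℂ :=
    (Matrix.traceLinearMap (Fin N) ℂ ℂ) ∘ₗ (LinearMap.mulLeft ℂ (Ufᴴ)) with hL
  have ht : HasDerivAt (fun δ : ℝ => (Ufᴴ * Φ δ).trace) ((Ufᴴ * D).trace) 0 := by
    have h := (((LinearMap.toContinuousLinearMap L).restrictScalars ℝ).hasFDerivAt).comp_hasDerivAt 0 hΦd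
    exact h
  set t' : ℂ := (Ufᴴ * D).trace with ht'
  set t0 : ℂ := (Ufᴴ * Φ 0).trace with ht0
  -- re/im derivatives
  have hre : HasDerivAt (fun δ : ℝ => ((Ufᴴ * Φ δ).trace).re) t'.re 0 := by
    have h := Complex.reCLM.hasFDerivAt.comp_hasDerivAt 0 ht
    exact h
  have him : HasDerivAt (fun δ : ℝ => ((Ufᴴ * Φ δ).trace).im) t'.im 0 := by
    have h := Complex.imCLM.hasFDerivAt.comp_hasDerivAt 0 ht
    exact h
  have hu : HasDerivAt (fun δ : ℝ =>
        ((Ufᴴ * Φ δ).trace).re * ((Ufᴴ * Φ δ).trace).re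
          + ((Ufᴴ * Φ δ).trace).im * ((Ufᴴ * Φ δ).trace).im)
      (t'.re * t0.re + t0.re * t'.re + (t'.im * t0.im + t0.im * t'.im)) 0 :=
    (hre.mul hre).add (him.mul him)
  have hu0 : t0.re * t0.re + t0.im * t0.im ≠ 0 := by
    have := Complex.normSq_pos.mpr h0
    rw [Complex.normSq_apply] at this
    exact ne_of_gt this
  have hsq := (Real.hasDerivAt_sqrt hu0).comp 0 hu
  set a : ℝ := ‖t0‖ with ha
  have ha' : Real.sqrt (t0.re * t0.re + t0.im * t0.im) = a := by
    rw [ha, Complex.norm_def, Complex.normSq_apply]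
  have hane : a ≠ 0 := by
    rw [ha]
    simpa using h0
  have hεd : HasDerivAt εt
      (-((1 / (2 * a) * (t'.re * t0.re + t0.re * t'.re + (t'.im * t0.im + t0.im * t'.im))) / N))
      0 := by
    have hfeq : εt = fun δ : ℝ =>
        1 - Real.sqrt (((Ufᴴ * Φ δ).trace).re * ((Ufᴴ * Φ δ).trace).re
          + ((Ufᴴ * Φ δ).trace).im * ((Ufᴴ * Φ δ).trace).im) / N := by
      funext δ
      rw [hεt δ, Complex.norm_def, Complex.normSq_apply]
    rw [hfeq]
    have := (hsq.div_const (N : ℝ)).const_sub 1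
    rw [ha'] at this
    exact this
  -- identify the derivative value
  convert hεd using 1
  -- the target sum equals the computed derivative
  have hsum : (∑ k ∈ Finset.range κ,
      (-(Complex.exp (-(φ : ℂ) * Complex.I) / (N : ℂ)) *
        (P k * Ufᴴ * Q k * X k).trace).re)
      = (-(Complex.exp (-(φ : ℂ) * Complex.I) / (N : ℂ)) * t').re := by
    rw [← Complex.re_sum, ← Finset.mul_sum]
    congr 2
    rw [ht', hD, Finset.mul_sum, Matrix.trace_sum]
    apply Finset.sum_congr rfl
    intro k _
    rw [show P k * Ufᴴ * Q k * X k = P k * (Ufᴴ * Q k * X k) by noncomm_ring,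
      Matrix.trace_mul_comm,
      show Ufᴴ * Q k * X k * P k = Ufᴴ * (Q k * X k * P k) by noncomm_ring]
  rw [hsum]
  -- e^{-iφ} = a / t0
  have hexp : Complex.exp (-(φ : ℂ) * Complex.I) = (a : ℂ) / t0 := by
    have habs : (a : ℂ) * Complex.exp ((φ : ℂ) * Complex.I) = t0 := by
      rw [ha, hφ]
      exact Complex.norm_mul_exp_arg_mul_I t0
    rw [eq_div_iff h0, ← habs]
    rw [mul_comm ((a:ℂ)) _, ← mul_assoc, ← Complex.exp_add]
    ring_nf
    simp [Complex.exp_zero]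
  rw [hexp]
  have hfactor : -((a : ℂ) / t0 / (N : ℂ)) * t' = ((-(a / N) : ℝ) : ℂ) * (t' / t0) := by
    push_cast
    field_simp
  have hnsq : Complex.normSq t0 = a * a := by
    rw [ha, ← Complex.sq_norm, sq]
  rw [hfactor, Complex.re_ofReal_mul, Complex.div_re, hnsq]
  have hNne : (N : ℝ) ≠ 0 := Nat.cast_ne_zero.mpr hN.ne'
  field_simp
  ring
end

section
/- Let N, κ be positive integers, Δ > 0, U_f an N×N unitary matrix, and for each k = 0, …, κ−1 let H⁽ᵏ⁾ and V⁽ᵏ⁾ be N×N Hermitian matrices. For δ ∈ ℝ define the perturbed fidelity error ε̃(δ) = 1 − |Tr[U_f† ∏_{k=κ−1}^{0} exp(−i(H⁽ᵏ⁾ + δV⁽ᵏ⁾)Δ)]|/N (time-ordered product). Then for all δ ∈ ℝ, |ε̃(δ) − ε̃(0)| ≤ |δ| · Δ · ∑_{k=0}^{κ−1} ‖V⁽ᵏ⁾‖, where ‖·‖ is the operator (spectral) norm. (A global robustness guarantee: the change in gate fidelity error under a structured piecewise-constant Hamiltonian uncertainty of strength δ is at most |δ| times the total time-weighted size of the uncertainty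 structures.) -/
open scoped Matrix Matrix.Norms.L2Operator
open NormedSpace

section Aux

variable {n : Type*} [Fintype n] [DecidableEq n]

/-- The exponential of a skew-adjoint matrix is unitary. -/
lemma aux_exp_mem_unitary (A : Matrix n n ℂ) (hA : Aᴴ = -A) :
    exp A ∈ unitary (Matrix n n ℂ) := by
  have hstar : star (exp A) = exp (-A) := by
    rw [star_exp, Matrix.star_eq_conjTranspose, hA]
  constructor
  · rw [hstar, ← Matrix.exp_add_of_commute _ _ ((Commute.refl A).neg_left), neg_add_cancel, exp_zero]
  · rw [hstar, ← Matrix.exp_add_of_commute _ _ ((Commute.refl A).neg_right), add_neg_cancel, exp_zero]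

set_option maxHeartbeats 1000000 in
/-- `‖exp A − exp B‖ ≤ ‖A − B‖` for skew-adjoint matrices `A`, `B` (operator norm). -/
lemma aux_norm_exp_sub_exp [Nonempty n] (A B : Matrix n n ℂ)
    (hA : Aᴴ = -A) (hB : Bᴴ = -B) :
    ‖exp A - exp B‖ ≤ ‖A - B‖ := by
  set f : ℝ → Matrix n n ℂ :=
    fun t => exp ((t : ℂ) • A) * exp ((1 - (t : ℂ)) • B) with hf
  set f' : ℝ → Matrix n n ℂ :=
    fun t => exp ((t : ℂ) • A) * (A - B) * exp ((1 - (t : ℂ)) • B) with hf'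
  have hskewA : ∀ t : ℝ, ((t : ℂ) • A)ᴴ = -((t : ℂ) • A) := by
    intro t
    rw [Matrix.conjTranspose_smul, hA]
    simp [Complex.star_def, Complex.conj_ofReal]
  have hskewB : ∀ t : ℝ, ((1 - (t : ℂ)) • B)ᴴ = -((1 - (t : ℂ)) • B) := by
    intro t
    rw [Matrix.conjTranspose_smul, hB]
    simp [Complex.star_def, Complex.conj_ofReal]
  have hderiv : ∀ t : ℝ, HasDerivAt f (f' t) t := by
    intro t
    have h1 : HasDerivAt (fun z : ℂ => exp (z • A)) (exp ((t : ℂ) • A) * A) (t : ℂ) :=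
      hasDerivAt_exp_smul_const A (t : ℂ)
    have hlin : HasDerivAt (fun z : ℂ => 1 - z) (-1 : ℂ) (t : ℂ) := by
      simpa using (hasDerivAt_id (t : ℂ)).const_sub 1
    have h2' : HasDerivAt (fun w : ℂ => exp (w • B)) (B * exp ((1 - (t : ℂ)) • B))
        (1 - (t : ℂ)) := hasDerivAt_exp_smul_const' B _
    have h2 : HasDerivAt (fun z : ℂ => exp ((1 - z) • B))
        ((-1 : ℂ) • (B * exp ((1 - (t : ℂ)) • B))) (t : ℂ) := h2'.scomp _ hlin
    have hmul := h1.mul h2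
    have hcomp : HasDerivAt (fun y : ℝ => exp ((y : ℂ) • A) * exp ((1 - (y : ℂ)) • B))
        (exp ((t : ℂ) • A) * A * exp ((1 - (t : ℂ)) • B) +
          exp ((t : ℂ) • A) * ((-1 : ℂ) • (B * exp ((1 - (t : ℂ)) • B)))) t := by
      have h := hmul.scomp t Complex.ofRealCLM.hasDerivAt
      rw [Complex.ofRealCLM_apply, Complex.ofReal_one, one_smul] at h
      exact h
    have heq : f' t = exp ((t : ℂ) • A) * A * exp ((1 - (t : ℂ)) • B) +
        exp ((t : ℂ) • A) * ((-1 : ℂ) • (B * exp ((1 - (t : ℂ)) • B))) := by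
      simp only [hf', neg_one_smul, mul_neg, sub_mul, mul_sub, ← mul_assoc]
      abel
    rw [heq]
    exact hcomp
  have hbound : ∀ t ∈ Set.Icc (0 : ℝ) 1, ‖f' t‖ ≤ ‖A - B‖ := by
    intro t _
    have hu1 : ‖exp ((t : ℂ) • A)‖ = 1 :=
      CStarRing.norm_of_mem_unitary (aux_exp_mem_unitary _ (hskewA t))
    have hu2 : ‖exp ((1 - (t : ℂ)) • B)‖ = 1 :=
      CStarRing.norm_of_mem_unitary (aux_exp_mem_unitary _ (hskewB t))
    calc ‖f' t‖ ≤ ‖exp ((t : ℂ) • A) * (A - B)‖ * ‖exp ((1 - (t : ℂ)) • B)‖ :=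
          norm_mul_le _ _
      _ ≤ ‖exp ((t : ℂ) • A)‖ * ‖A - B‖ * ‖exp ((1 - (t : ℂ)) • B)‖ := by
          gcongr; exact norm_mul_le _ _
      _ = ‖A - B‖ := by rw [hu1, hu2, one_mul, mul_one]
  have key := norm_image_sub_le_of_norm_deriv_le_segment_01'
    (f' := f') (fun x _ => (hderiv x).hasDerivWithinAt)
    (fun x hx => hbound x (Set.Ico_subset_Icc_self hx))
  have hf1 : f 1 = exp A := by
    simp [hf, exp_zero]
  have hf0 : f 0 = exp B := by
    simp [hf, exp_zero]
  rwa [hf1, hf0] at key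

/-- Telescoping bound for products of unitaries. -/
lemma aux_norm_list_prod_sub {E : Type*} [NormedRing E] [StarRing E] [CStarRing E] [Nontrivial E]
    (l : List ℕ) (P Q : ℕ → E) (b : ℕ → ℝ)
    (hP : ∀ i ∈ l, P i ∈ unitary E) (hQ : ∀ i ∈ l, Q i ∈ unitary E)
    (hb : ∀ i ∈ l, ‖P i - Q i‖ ≤ b i) :
    ‖(l.map P).prod - (l.map Q).prod‖ ≤ (l.map b).sum := by
  induction l with
  | nil => simp
  | cons a l ih =>
    simp only [List.map_cons, List.prod_cons, List.sum_cons]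
    have hq : (l.map Q).prod ∈ unitary E := by
      refine Submonoid.list_prod_mem _ ?_
      intro x hx
      obtain ⟨i, hi, rfl⟩ := List.mem_map.mp hx
      exact hQ i (List.mem_cons_of_mem _ hi)
    have hPa : ‖P a‖ = 1 := CStarRing.norm_of_mem_unitary (hP a (List.mem_cons_self))
    have hq1 : ‖(l.map Q).prod‖ = 1 := CStarRing.norm_of_mem_unitary hq
    have key : P a * (l.map P).prod - Q a * (l.map Q).prod
        = (P a - Q a) * (l.map Q).prod + P a * ((l.map P).prod - (l.map Q).prod) := by
      noncomm_ring
    rw [key]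
    calc ‖(P a - Q a) * (l.map Q).prod + P a * ((l.map P).prod - (l.map Q).prod)‖
        ≤ ‖(P a - Q a) * (l.map Q).prod‖ + ‖P a * ((l.map P).prod - (l.map Q).prod)‖ :=
          norm_add_le _ _
      _ ≤ ‖P a - Q a‖ * ‖(l.map Q).prod‖ + ‖P a‖ * ‖(l.map P).prod - (l.map Q).prod‖ := by
          gcongr <;> exact norm_mul_le _ _
      _ ≤ b a + (l.map b).sum := by
          rw [hq1, hPa, mul_one, one_mul]
          exact add_le_add (hb a (List.mem_cons_self))
            (ih (fun i hi => hP i (List.mem_cons_of_mem _ hi))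
              (fun i hi => hQ i (List.mem_cons_of_mem _ hi))
              (fun i hi => hb i (List.mem_cons_of_mem _ hi)))

/-- Trace is bounded by the dimension times the operator norm. -/
lemma aux_abs_trace_le {N : ℕ} (M : Matrix (Fin N) (Fin N) ℂ) :
    ‖M.trace‖ ≤ N * ‖M‖ := by
  have hentry : ∀ i : Fin N, ‖M i i‖ ≤ ‖M‖ := by
    intro i
    set x : EuclideanSpace ℂ (Fin N) := EuclideanSpace.single i 1 with hx
    set y : EuclideanSpace ℂ (Fin N) := (EuclideanSpace.equiv (Fin N) ℂ).symm (M *ᵥ x) with hy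
    have hyi : y i = M i i := by
      simp [hy, hx, Matrix.mulVec, dotProduct, EuclideanSpace.single_apply,
        EuclideanSpace.equiv, Finset.sum_ite_eq']
    have h1 : ‖M i i‖ = ‖y i‖ := by rw [hyi]
    have h2 : ‖y i‖ ≤ ‖y‖ := by
      have := norm_inner_le_norm (𝕜 := ℂ) (EuclideanSpace.single i (1 : ℂ)) y
      rwa [EuclideanSpace.inner_single_left, map_one, one_mul,
        EuclideanSpace.norm_single, norm_one, one_mul] at this
    have h3 : ‖y‖ ≤ ‖M‖ := by
      have := M.l2_opNorm_mulVec x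
      rwa [hx, EuclideanSpace.norm_single, norm_one, mul_one] at this
    rw [h1]; exact h2.trans h3
  calc ‖M.trace‖ ≤ ∑ i, ‖M i i‖ := by
        simpa [Matrix.trace, Matrix.diag] using norm_sum_le Finset.univ (fun i => M i i)
    _ ≤ ∑ _i : Fin N, ‖M‖ := Finset.sum_le_sum fun i _ => hentry i
    _ = N * ‖M‖ := by simp [mul_comm]

lemma aux_list_range_sum (κ : ℕ) (b : ℕ → ℝ) :
    ((List.range κ).map b).sum = ∑ k ∈ Finset.range κ, b k := by
  induction κ with
  | zero => simp
  | succ n ih =>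
    rw [List.range_succ, Finset.sum_range_succ, List.map_append, List.sum_append, ih]
    simp

end Aux

set_option maxHeartbeats 1000000 in
/-- Global robustness guarantee: the change in gate fidelity error under a structured
piecewise-constant Hamiltonian uncertainty of strength `δ` is at most `|δ|` times the
total time-weighted size of the uncertainty structures,
`|ε̃(δ) − ε̃(0)| ≤ |δ| Δ ∑ₖ ‖V⁽ᵏ⁾‖`. -/
theorem fidelity_error_global_robustness_bound (N κ : ℕ) (hN : 0 < N) (hκ : 0 < κ)
    (Δ : ℝ) (hΔ : 0 < Δ)
    (Uf : Matrix (Fin N) (Fin N) ℂ) (hUf : Uf ∈ Matrix.unitaryGroup (Fin N) ℂ)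
    (H V : ℕ → Matrix (Fin N) (Fin N) ℂ)
    (hH : ∀ k < κ, (H k).IsHermitian) (hV : ∀ k < κ, (V k).IsHermitian)
    (εt : ℝ → ℝ)
    (hεt : ∀ δ : ℝ, εt δ = 1 - ‖((Ufᴴ *
      (((List.range κ).reverse).map
        (fun k => exp ((-(Complex.I) * (Δ : ℂ)) • (H k + (δ : ℂ) • V k)))).prod).trace)‖ / N) :
    ∀ δ : ℝ, |εt δ - εt 0| ≤ |δ| * Δ * ∑ k ∈ Finset.range κ, ‖V k‖ := by
  intro δ
  haveI : NeZero N := ⟨hN.ne'⟩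
  -- the one-interval propagators
  set P : ℕ → Matrix (Fin N) (Fin N) ℂ :=
    fun k => exp ((-(Complex.I) * (Δ : ℂ)) • (H k + (δ : ℂ) • V k)) with hP
  set Q : ℕ → Matrix (Fin N) (Fin N) ℂ :=
    fun k => exp ((-(Complex.I) * (Δ : ℂ)) • (H k + ((0 : ℝ) : ℂ) • V k)) with hQ
  -- skewness
  have hskew : ∀ (d : ℝ), ∀ k < κ,
      ((-(Complex.I) * (Δ : ℂ)) • (H k + (d : ℂ) • V k))ᴴ
        = -((-(Complex.I) * (Δ : ℂ)) • (H k + (d : ℂ) • V k)) := by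
    intro d k hk
    have hherm : (H k + (d : ℂ) • V k)ᴴ = H k + (d : ℂ) • V k := by
      rw [Matrix.conjTranspose_add, (hH k hk).eq, Matrix.conjTranspose_smul, (hV k hk).eq]
      congr 1
      simp [Complex.star_def, Complex.conj_ofReal]
    rw [Matrix.conjTranspose_smul, hherm, ← neg_smul]
    congr 1
    simp [Complex.star_def]
  -- per-interval bound
  have hstep : ∀ k < κ, ‖P k - Q k‖ ≤ |δ| * Δ * ‖V k‖ := by
    intro k hk
    have h1 : ‖P k - Q k‖ ≤ ‖(-(Complex.I) * (Δ : ℂ)) • (H k + (δ : ℂ) • V k)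
        - (-(Complex.I) * (Δ : ℂ)) • (H k + ((0 : ℝ) : ℂ) • V k)‖ :=
      aux_norm_exp_sub_exp _ _ (hskew δ k hk) (hskew 0 k hk)
    have h2 : (-(Complex.I) * (Δ : ℂ)) • (H k + (δ : ℂ) • V k)
        - (-(Complex.I) * (Δ : ℂ)) • (H k + ((0 : ℝ) : ℂ) • V k)
        = (-(Complex.I) * (Δ : ℂ)) • ((δ : ℂ) • V k) := by
      rw [← smul_sub]
      congr 1
      push_cast
      simp
    rw [h2] at h1
    refine h1.trans (le_of_eq ?_)
    rw [norm_smul, norm_smul]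
    simp [abs_of_pos hΔ, Complex.norm_real]
    ring
  -- unitarity
  have hPu : ∀ k ∈ (List.range κ).reverse, P k ∈ unitary (Matrix (Fin N) (Fin N) ℂ) := by
    intro k hk
    exact aux_exp_mem_unitary _ (hskew δ k (List.mem_range.mp (List.mem_reverse.mp hk)))
  have hQu : ∀ k ∈ (List.range κ).reverse, Q k ∈ unitary (Matrix (Fin N) (Fin N) ℂ) := by
    intro k hk
    exact aux_exp_mem_unitary _ (hskew 0 k (List.mem_range.mp (List.mem_reverse.mp hk)))
  -- telescoping
  have htel : ‖((List.range κ).reverse.map P).prod - ((List.range κ).reverse.map Q).prod‖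
      ≤ |δ| * Δ * ∑ k ∈ Finset.range κ, ‖V k‖ := by
    refine (aux_norm_list_prod_sub _ P Q (fun k => |δ| * Δ * ‖V k‖) hPu hQu ?_).trans ?_
    · intro i hi
      exact hstep i (List.mem_range.mp (List.mem_reverse.mp hi))
    · rw [List.map_reverse, List.sum_reverse, aux_list_range_sum, Finset.mul_sum]
  -- the trace terms
  set Tδ := (Ufᴴ * ((List.range κ).reverse.map P).prod).trace with hTδ
  set T0 := (Ufᴴ * ((List.range κ).reverse.map Q).prod).trace with hT0
  have hε : εt δ - εt 0 = (‖T0‖ - ‖Tδ‖) / N := by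
    rw [hεt δ, hεt 0, hTδ, hT0, hP, hQ]
    ring
  have hUfH : ‖Ufᴴ‖ = 1 := by
    refine CStarRing.norm_of_mem_unitary (E := Matrix (Fin N) (Fin N) ℂ) ?_
    rw [← Matrix.star_eq_conjTranspose]
    exact Unitary.star_mem hUf
  have habs : |‖T0‖ - ‖Tδ‖| ≤ ‖T0 - Tδ‖ :=
    abs_norm_sub_norm_le _ _
  have hdiff : T0 - Tδ = (Ufᴴ * (((List.range κ).reverse.map Q).prod
      - ((List.range κ).reverse.map P).prod)).trace := by
    rw [hT0, hTδ, Matrix.mul_sub, Matrix.trace_sub]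
  have htr : ‖T0 - Tδ‖
      ≤ N * ‖((List.range κ).reverse.map Q).prod - ((List.range κ).reverse.map P).prod‖ := by
    rw [hdiff]
    refine (aux_abs_trace_le _).trans ?_
    have := Matrix.l2_opNorm_mul Ufᴴ (((List.range κ).reverse.map Q).prod
      - ((List.range κ).reverse.map P).prod)
    rw [hUfH, one_mul] at this
    exact mul_le_mul_of_nonneg_left this (Nat.cast_nonneg N)
  have hNpos : (0 : ℝ) < N := Nat.cast_pos.mpr hN
  rw [hε, abs_div, abs_of_pos hNpos, div_le_iff₀ hNpos]
  calc |‖T0‖ - ‖Tδ‖| ≤ ‖T0 - Tδ‖ := habs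
    _ ≤ N * ‖((List.range κ).reverse.map Q).prod - ((List.range κ).reverse.map P).prod‖ := htr
    _ = N * ‖((List.range κ).reverse.map P).prod - ((List.range κ).reverse.map Q).prod‖ := by
        rw [norm_sub_rev]
    _ ≤ N * (|δ| * Δ * ∑ k ∈ Finset.range κ, ‖V k‖) :=
        mul_le_mul_of_nonneg_left htel (Nat.cast_nonneg N)
    _ = |δ| * Δ * (∑ k ∈ Finset.range κ, ‖V k‖) * N := by ring
end
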